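/- arXiv:1810.06780 — 9 statements merged into one kernel-verified Lean document; each statement's English description precedes it below -/
import Mathlib

section
/- Let F be a field in which every quadratic and cubic polynomial has a root. Then every 2-dimensional algebra over F has at least one one-dimensional subalgebra. -/
/-!
A line `F ∙ w` is closed under a bilinear multiplication as soon as `w * w ∈ F ∙ w`.
The product `(x, 1) * (x, 1)` is quadratic in `x`, so the condition
`(x, 1) * (x, 1) ∈ F ∙ (x, 1)` says that `x` is a root of a cubic whose leading coefficient is
minus the second coordinate of `(1, 0) * (1, 0)`. If that coefficient vanishes, `F ∙ (1, 0)` is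
already a subalgebra; otherwise the cubic has a root.
-/

open Polynomial

namespace LinearMap

variable {R M : Type*} [CommSemiring R] [AddCommMonoid M] [Module R M]

theorem apply_mem_span_singleton_of_apply_self_mem (m : M →ₗ[R] M →ₗ[R] M) {w u v : M}
    (hw : m w w ∈ R ∙ w) (hu : u ∈ R ∙ w) (hv : v ∈ R ∙ w) : m u v ∈ R ∙ w := by
  obtain ⟨s, rfl⟩ := Submodule.mem_span_singleton.mp hu
  obtain ⟨t, rfl⟩ := Submodule.mem_span_singleton.mp hv
  simpa only [map_smul, smul_apply] using Submodule.smul_mem _ t (Submodule.smul_mem _ s hw)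

theorem apply_smul_add_self (m : M →ₗ[R] M →ₗ[R] M) (x : R) (e f : M) :
    m (x • e + f) (x • e + f) = (x * x) • m e e + x • (m e f + m f e) + m f f := by
  simp only [map_add, map_smul, add_apply, smul_apply, smul_add, smul_smul]
  abel

end LinearMap

theorem Prod.mem_span_singleton_mk_one {R : Type*} [CommSemiring R] {x : R} {p : R × R} :
    p ∈ R ∙ (x, 1) ↔ p.1 = x * p.2 := by
  rw [Submodule.mem_span_singleton]
  constructor
  · rintro ⟨t, rfl⟩
    simp [mul_comm]
  · intro h
    exact ⟨p.2, by ext <;> simp [h, mul_comm]⟩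

section TwoDimensional

variable {R : Type*} [CommRing R] (m : (R × R) →ₗ[R] (R × R) →ₗ[R] (R × R))

def lineCubic : Cubic R :=
  let a := m (1, 0) (1, 0)
  let b := m (1, 0) (0, 1) + m (0, 1) (1, 0)
  let c := m (0, 1) (0, 1)
  ⟨-a.2, a.1 - b.2, b.1 - c.2, c.1⟩

theorem eval_lineCubic (x : R) :
    (lineCubic m).toPoly.eval x = (m (x, 1) (x, 1)).1 - x * (m (x, 1) (x, 1)).2 := by
  have hx : ((x, 1) : R × R) = x • (1, 0) + (0, 1) := by ext <;> simp
  rw [hx, LinearMap.apply_smul_add_self]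
  simp only [lineCubic, Cubic.toPoly, eval_add, eval_mul, eval_pow, eval_C,
    eval_X, Prod.fst_add, Prod.snd_add, Prod.smul_fst, Prod.smul_snd, smul_add, smul_eq_mul]
  ring

theorem apply_mk_one_self_mem_span_of_isRoot {x : R} (hx : (lineCubic m).toPoly.IsRoot x) :
    m (x, 1) (x, 1) ∈ R ∙ (x, 1) := by
  rwa [Prod.mem_span_singleton_mk_one, ← sub_eq_zero, ← eval_lineCubic]

theorem apply_one_zero_self_mem_span_of_lineCubic_a_eq_zero (h : (lineCubic m).a = 0) :
    m (1, 0) (1, 0) ∈ R ∙ (1, 0) :=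
  Submodule.mem_span_singleton.mpr ⟨(m (1, 0) (1, 0)).1, by
    ext <;> simp_all [lineCubic]⟩

end TwoDimensional

theorem exists_ne_zero_apply_self_mem_span_singleton {F : Type*} [Field F]
    (hroots : ∀ q : F[X], q.degree = 3 → ∃ x, q.IsRoot x)
    (m : (F × F) →ₗ[F] (F × F) →ₗ[F] (F × F)) :
    ∃ w : F × F, w ≠ 0 ∧ m w w ∈ F ∙ w := by
  by_cases ha : (lineCubic m).a = 0
  · exact ⟨(1, 0), by simp, apply_one_zero_self_mem_span_of_lineCubic_a_eq_zero m ha⟩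
  · obtain ⟨x, hx⟩ := hroots _ (Cubic.degree_of_a_ne_zero ha)
    exact ⟨(x, 1), by simp, apply_mk_one_self_mem_span_of_isRoot m hx⟩

theorem stmt_6 {F : Type*} [Field F]
    (hroots : ∀ q : Polynomial F, (q.degree = 2 ∨ q.degree = 3) → ∃ x : F, q.IsRoot x)
    (m : (F × F) →ₗ[F] (F × F) →ₗ[F] (F × F)) :
    ∃ w : F × F, w ≠ 0 ∧
      ∀ u v : F × F, u ∈ Submodule.span F {w} → v ∈ Submodule.span F {w} →
        m u v ∈ Submodule.span F {w} := by
  obtain ⟨w, hw, hww⟩ :=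
    exists_ne_zero_apply_self_mem_span_singleton (fun q hq => hroots q (Or.inr hq)) m
  exact ⟨w, hw, fun u v => m.apply_mem_span_singleton_of_apply_self_mem hww⟩
end

section
/- Let F be an infinite field and A a 2-dimensional algebra over F. If A has four distinct one-dimensional subalgebras, then every one-dimensional subspace of A is a subalgebra. -/
/-!
For `z ≠ 0` the line `F ∙ z` is closed under `m` iff `det (z, m z z) = 0`, and
`z ↦ det (z, m z z)` is a binary cubic form. A nonzero binary form of degree at most `n` vanishes
on at most `n` pairwise non-proportional vectors (dehomogenize and count roots, treating the point
at infinity separately), so four distinct one-dimensional subalgebras force the cubic to vanish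
identically.
-/

namespace Polynomial

variable {K : Type*} [Field K]

lemma eval_homogenize_snd_eq_zero (p : K[X]) (n : ℕ) (x : K) :
    MvPolynomial.eval ![x, 0] (p.homogenize n) = p.coeff n * x ^ n := by
  simp only [homogenize, Finset.Nat.sum_antidiagonal_eq_sum_range_succ_mk, MvPolynomial.eval_sum,
    MvPolynomial.eval_monomial, Finsupp.prod_pow, Fin.prod_univ_two]
  rw [Finset.sum_eq_single n]
  · simp
  · intro k hk hkn
    have : n - k ≠ 0 := by rw [Finset.mem_range] at hk; omega
    simp [this]
  · simp

variable {ι : Type*} [Fintype ι] {v : ι → K × K}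

lemma eq_zero_of_eval_homogenize_eq_zero_of_snd_ne_zero {p : K[X]} {n : ℕ}
    (hn : p.natDegree ≤ n) (hv2 : ∀ i, (v i).2 ≠ 0)
    (hv : Pairwise fun i j ↦ (v i).1 * (v j).2 ≠ (v i).2 * (v j).1)
    (hcard : p.natDegree < Fintype.card ι)
    (h : ∀ i, MvPolynomial.eval ![(v i).1, (v i).2] (p.homogenize n) = 0) : p = 0 := by
  refine eq_zero_of_natDegree_lt_card_of_eval_eq_zero p (f := fun i ↦ (v i).1 / (v i).2)
    (fun i j hij ↦ ?_) (fun i ↦ ?_) hcard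
  · by_contra hne
    exact hv hne (by linear_combination (div_eq_div_iff (hv2 i) (hv2 j)).mp hij)
  · simpa [eval_homogenize hn ![_, _] (hv2 i), hv2 i] using h i

theorem eq_zero_of_eval_homogenize_eq_zero {p : K[X]} {n : ℕ} (hn : p.natDegree ≤ n)
    (hv0 : ∀ i, v i ≠ 0) (hv : Pairwise fun i j ↦ (v i).1 * (v j).2 ≠ (v i).2 * (v j).1)
    (hcard : n < Fintype.card ι)
    (h : ∀ i, MvPolynomial.eval ![(v i).1, (v i).2] (p.homogenize n) = 0) : p = 0 := by
  classical
  by_cases hv2 : ∀ i, (v i).2 ≠ 0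
  · exact eq_zero_of_eval_homogenize_eq_zero_of_snd_ne_zero hn hv2 hv (hn.trans_lt hcard) h
  obtain ⟨i₀, hi₀⟩ := not_forall_not.mp hv2
  -- `v i₀` is the only point at infinity, where the form reduces to its top coefficient.
  have hcoeff : p.coeff n = 0 := by
    have hx₀ : (v i₀).1 ≠ 0 := fun h ↦ hv0 i₀ (Prod.ext h hi₀)
    simpa [hi₀, eval_homogenize_snd_eq_zero, hx₀] using h i₀
  by_contra hp
  have hdeg : p.natDegree < n :=
    lt_of_le_of_ne hn fun hdeg ↦ hp (leadingCoeff_eq_zero.mp (by rwa [leadingCoeff, hdeg]))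
  refine hp (eq_zero_of_eval_homogenize_eq_zero_of_snd_ne_zero (v := fun j : {j // j ≠ i₀} ↦ v j)
    hn (fun j hj ↦ hv j.2.symm (by rw [hi₀, hj]; ring))
    (fun j k hjk ↦ hv (Subtype.coe_ne_coe.mpr hjk))
    ?_ fun j ↦ h j)
  rw [Fintype.card_subtype_compl, Fintype.card_subtype_eq]
  omega

end Polynomial

open Polynomial

section

variable {K : Type*} [Field K]

lemma mem_span_singleton_iff_mul_eq {z : K × K} (hz : z ≠ 0) {v : K × K} :
    v ∈ K ∙ z ↔ z.1 * v.2 = z.2 * v.1 := by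
  rw [Submodule.mem_span_singleton]
  constructor
  · rintro ⟨c, rfl⟩
    simp only [Prod.smul_fst, Prod.smul_snd, smul_eq_mul]
    ring
  · intro h
    by_cases h₁ : z.1 = 0
    · have h₂ : z.2 ≠ 0 := fun h₂ ↦ hz (Prod.ext h₁ h₂)
      refine ⟨v.2 / z.2, Prod.ext ?_ ?_⟩ <;> simp only [Prod.smul_fst, Prod.smul_snd, smul_eq_mul]
      · simpa [h₁, h₂, eq_comm] using h
      · field_simp
    · refine ⟨v.1 / z.1, Prod.ext ?_ ?_⟩ <;> simp only [Prod.smul_fst, Prod.smul_snd, smul_eq_mul]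
      · field_simp
      · field_simp
        linear_combination -h

lemma span_singleton_eq_of_mul_eq {z w : K × K} (hz : z ≠ 0) (hw : w ≠ 0)
    (h : z.1 * w.2 = z.2 * w.1) : K ∙ z = K ∙ w :=
  le_antisymm (Submodule.span_singleton_le_iff_mem _ _ |>.mpr <|
      (mem_span_singleton_iff_mul_eq hw).mpr (by linear_combination -h))
    (Submodule.span_singleton_le_iff_mem _ _ |>.mpr <| (mem_span_singleton_iff_mul_eq hz).mpr h)

def detMulSelf (m : (K × K) →ₗ[K] (K × K) →ₗ[K] (K × K)) (z : K × K) : K :=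
  z.1 * (m z z).2 - z.2 * (m z z).1

lemma forall_mul_mem_span_singleton_iff (m : (K × K) →ₗ[K] (K × K) →ₗ[K] (K × K))
    {z : K × K} (hz : z ≠ 0) :
    (∀ u ∈ K ∙ z, ∀ v ∈ K ∙ z, m u v ∈ K ∙ z) ↔ detMulSelf m z = 0 := by
  rw [detMulSelf, sub_eq_zero, ← mem_span_singleton_iff_mul_eq hz]
  refine ⟨fun h ↦ h z (Submodule.mem_span_singleton_self z) z (Submodule.mem_span_singleton_self z),
    fun h u hu v hv ↦ ?_⟩
  obtain ⟨a, rfl⟩ := Submodule.mem_span_singleton.mp hu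
  obtain ⟨b, rfl⟩ := Submodule.mem_span_singleton.mp hv
  simpa only [map_smul, LinearMap.smul_apply] using
    Submodule.smul_mem _ b (Submodule.smul_mem _ a h)

lemma exists_detMulSelf_eq_eval_homogenize (m : (K × K) →ₗ[K] (K × K) →ₗ[K] (K × K)) :
    ∃ q : K[X], q.natDegree ≤ 3 ∧
      ∀ z : K × K, detMulSelf m z = MvPolynomial.eval ![z.1, z.2] (q.homogenize 3) := by
  set e₁ : K × K := (1, 0)
  set e₂ : K × K := (0, 1)
  set s := m e₁ e₂ + m e₂ e₁
  refine ⟨C (m e₁ e₁).2 * X ^ 3 + C (s.2 - (m e₁ e₁).1) * X ^ 2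
    + C ((m e₂ e₂).2 - s.1) * X + C (-(m e₂ e₂).1), by compute_degree, fun z ↦ ?_⟩
  have hmzz : m z z = (z.1 * z.1) • m e₁ e₁ + (z.1 * z.2) • s + (z.2 * z.2) • m e₂ e₂ := by
    calc m z z = m (z.1 • e₁ + z.2 • e₂) (z.1 • e₁ + z.2 • e₂) := by simp [e₁, e₂]
      _ = _ := by
        simp only [map_add, map_smul, LinearMap.add_apply, LinearMap.smul_apply, s]
        module
  simp only [homogenize_add, homogenize_C_mul, homogenize_X_pow le_rfl,
    homogenize_X_pow (by norm_num : 2 ≤ 3), homogenize_X (by norm_num : 3 ≠ 0), homogenize_C]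
  simp only [detMulSelf, hmzz, Prod.fst_add, Prod.snd_add, Prod.smul_fst, Prod.smul_snd,
    smul_eq_mul, map_add, map_mul, map_pow, MvPolynomial.eval_C, MvPolynomial.eval_X,
    Matrix.cons_val_zero, Matrix.cons_val_one, Matrix.cons_val_fin_one]
  ring

end

theorem stmt_7_general {F : Type*} [Field F]
    (m : (F × F) →ₗ[F] (F × F) →ₗ[F] (F × F))
    (w : Fin 4 → F × F) (hw : ∀ i, w i ≠ 0)
    (hdist : ∀ i j, i ≠ j → Submodule.span F {w i} ≠ Submodule.span F {w j})
    (hsub : ∀ i, ∀ u ∈ Submodule.span F {w i}, ∀ v ∈ Submodule.span F {w i},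
      m u v ∈ Submodule.span F {w i}) :
    ∀ z : F × F, z ≠ 0 →
      ∀ u ∈ Submodule.span F {z}, ∀ v ∈ Submodule.span F {z},
        m u v ∈ Submodule.span F {z} := by
  obtain ⟨q, hq, hdet⟩ := exists_detMulSelf_eq_eval_homogenize m
  have hq0 : q = 0 := by
    refine eq_zero_of_eval_homogenize_eq_zero hq hw
      (fun i j hij h ↦ hdist i j hij (span_singleton_eq_of_mul_eq (hw i) (hw j) h))
      (by simp) fun i ↦ ?_
    rw [← hdet, ← forall_mul_mem_span_singleton_iff m (hw i)]
    exact hsub i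
  intro z hz
  rw [forall_mul_mem_span_singleton_iff m hz, hdet, hq0, homogenize_zero, map_zero]

theorem stmt_7 {F : Type*} [Field F] [Infinite F]
    (m : (F × F) →ₗ[F] (F × F) →ₗ[F] (F × F))
    (w : Fin 4 → F × F) (hw : ∀ i, w i ≠ 0)
    (hdist : ∀ i j, i ≠ j → Submodule.span F {w i} ≠ Submodule.span F {w j})
    (hsub : ∀ i, ∀ u ∈ Submodule.span F {w i}, ∀ v ∈ Submodule.span F {w i},
      m u v ∈ Submodule.span F {w i}) :
    ∀ z : F × F, z ≠ 0 →
      ∀ u ∈ Submodule.span F {z}, ∀ v ∈ Submodule.span F {z},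
        m u v ∈ Submodule.span F {z} :=
  stmt_7_general m w hw hdist hsub
end

section
/- Let F be a field with char F ≠ 2,3 containing √3 (e.g., algebraically closed), and let A₁₁ be the 2-dimensional F-algebra with basis e₁,e₂ and multiplication e₁e₁ = e₂, e₁e₂ = e₁, e₂e₁ = e₁, e₂e₂ = −e₂. Then A₁₁ has exactly three one-dimensional subalgebras, namely F·e₂, F·(e₁ − e₂/√3), and F·(e₁ + e₂/√3). -/
/-- Multiplication of the algebra `A₁₁`: `e₁e₁ = e₂`, `e₁e₂ = e₂e₁ = e₁`, `e₂e₂ = -e₂`. -/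
def mulA11 {F : Type*} [Field F] (u v : F × F) : F × F :=
  (u.1 * v.2 + u.2 * v.1, u.1 * v.1 - u.2 * v.2)

/-!
Since `mulA11` is bilinear, the line `F w` is a subalgebra iff `w * w ∈ F w`, i.e. iff the
determinant of `w * w = (2ab, a² - b²)` and `w = (a, b)` vanishes. That determinant is
`a (3b² - a²) = -a (a - s b) (a + s b)`, and its three linear factors vanish exactly on the three
listed lines.
-/

namespace Prod

variable {K : Type*} [Field K]

theorem mem_span_singleton_iff_mul_eq_mul {u w : K × K} (hw : w ≠ 0) :
    u ∈ Submodule.span K {w} ↔ u.1 * w.2 = u.2 * w.1 := by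
  refine ⟨fun hu ↦ ?_, fun h ↦ Submodule.mem_span_singleton.mpr ?_⟩
  · obtain ⟨t, rfl⟩ := Submodule.mem_span_singleton.mp hu
    simp only [smul_fst, smul_snd, smul_eq_mul]
    ring
  · by_cases hw₁ : w.1 = 0
    · have hw₂ : w.2 ≠ 0 := fun hw₂ ↦ hw (Prod.ext hw₁ hw₂)
      refine ⟨u.2 / w.2, Prod.ext ?_ ?_⟩ <;> simp only [smul_fst, smul_snd, smul_eq_mul]
      · simpa [hw₁, hw₂, eq_comm] using h
      · field_simp
    · refine ⟨u.1 / w.1, Prod.ext ?_ ?_⟩ <;> simp only [smul_fst, smul_snd, smul_eq_mul]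
      · field_simp
      · field_simp
        linear_combination h

theorem span_singleton_eq_span_singleton_iff_mul_eq_mul {u w : K × K} (hu : u ≠ 0)
    (hw : w ≠ 0) :
    Submodule.span K {u} = Submodule.span K {w} ↔ u.1 * w.2 = u.2 * w.1 := by
  rw [le_antisymm_iff, Submodule.span_singleton_le_iff_mem, Submodule.span_singleton_le_iff_mem,
    mem_span_singleton_iff_mul_eq_mul hw, mem_span_singleton_iff_mul_eq_mul hu]
  exact ⟨And.left, fun h ↦ ⟨h, by linear_combination -h⟩⟩

end Prod

section A11

variable {F : Type*} [Field F]

theorem mulA11_smul_smul (c d : F) (g : F × F) :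
    mulA11 (c • g) (d • g) = (c * d) • mulA11 g g := by
  ext <;> simp only [mulA11, Prod.smul_fst, Prod.smul_snd, smul_eq_mul] <;> ring

theorem forall_mulA11_mem_span_singleton_iff (w : F × F) :
    (∀ u v : F × F, u ∈ Submodule.span F {w} → v ∈ Submodule.span F {w} →
        mulA11 u v ∈ Submodule.span F {w}) ↔ mulA11 w w ∈ Submodule.span F {w} := by
  refine ⟨fun h ↦ h w w (Submodule.mem_span_singleton_self w)
    (Submodule.mem_span_singleton_self w), fun h u v hu hv ↦ ?_⟩
  obtain ⟨c, rfl⟩ := Submodule.mem_span_singleton.mp hu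
  obtain ⟨d, rfl⟩ := Submodule.mem_span_singleton.mp hv
  rw [mulA11_smul_smul]
  exact Submodule.smul_mem _ _ h

end A11

theorem stmt_8_general {F : Type*} [Field F] (h3 : ringChar F ≠ 3)
    (s : F) (hs : s ^ 2 = 3) :
    ∀ w : F × F, w ≠ 0 →
      ((∀ u v : F × F, u ∈ Submodule.span F {w} → v ∈ Submodule.span F {w} →
          mulA11 u v ∈ Submodule.span F {w}) ↔
        (Submodule.span F {w} = Submodule.span F {(((0 : F), (1 : F)) : F × F)} ∨
         Submodule.span F {w} = Submodule.span F {(((1 : F), -(1 / s)) : F × F)} ∨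
         Submodule.span F {w} = Submodule.span F {(((1 : F), 1 / s) : F × F)})) := by
  have h3F : (3 : F) ≠ 0 := fun h ↦
    h3 (CharP.ringChar_of_prime_eq_zero Nat.prime_three (by exact_mod_cast h))
  have hs0 : s ≠ 0 := by
    rintro rfl
    exact h3F (by rw [← hs]; ring)
  rintro ⟨a, b⟩ hw
  rw [forall_mulA11_mem_span_singleton_iff, Prod.mem_span_singleton_iff_mul_eq_mul hw,
    Prod.span_singleton_eq_span_singleton_iff_mul_eq_mul hw (by simp),
    Prod.span_singleton_eq_span_singleton_iff_mul_eq_mul hw (by simp),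
    Prod.span_singleton_eq_span_singleton_iff_mul_eq_mul hw (by simp)]
  simp only [mulA11]
  have hcubic : (a * b + b * a) * b = (a * a - b * b) * a ↔
      a * ((a + b * s) * (a - b * s)) = 0 :=
    ⟨fun h ↦ by linear_combination -h - a * b ^ 2 * hs,
      fun h ↦ by linear_combination -h - a * b ^ 2 * hs⟩
  rw [hcubic, mul_eq_zero, mul_eq_zero, add_eq_zero_iff_eq_neg, sub_eq_zero, mul_one, mul_zero,
    mul_one, mul_one_div, mul_neg, mul_one_div, neg_eq_iff_eq_neg, div_eq_iff hs0, div_eq_iff hs0,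
    neg_mul]

theorem stmt_8 {F : Type*} [Field F] (h2 : ringChar F ≠ 2) (h3 : ringChar F ≠ 3)
    (s : F) (hs : s ^ 2 = 3) :
    ∀ w : F × F, w ≠ 0 →
      ((∀ u v : F × F, u ∈ Submodule.span F {w} → v ∈ Submodule.span F {w} →
          mulA11 u v ∈ Submodule.span F {w}) ↔
        (Submodule.span F {w} = Submodule.span F {(((0 : F), (1 : F)) : F × F)} ∨
         Submodule.span F {w} = Submodule.span F {(((1 : F), -(1 / s)) : F × F)} ∨
         Submodule.span F {w} = Submodule.span F {(((1 : F), 1 / s) : F × F)})) :=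
  stmt_8_general h3 s hs
end

section
/- Let F be a field with char F ≠ 2,3 containing √3, and let A₁₁ be the algebra with e₁e₁ = e₂, e₁e₂ = e₂e₁ = e₁, e₂e₂ = −e₂. Then the set of idempotents of A₁₁ is exactly {−e₂, (√3/2)e₁ + (1/2)e₂, −(√3/2)e₁ + (1/2)e₂}. -/
/-!
Writing `v = a e₁ + b e₂`, the equation `v² = v` reads `2ab = a` and `a² - b² = b`.
Either `a = 0`, and then `b² + b = 0` leaves only `v = -e₂` besides `0`; or `b = 1/2`,
and then `a² = 3/4 = (√3/2)²` gives the other two idempotents.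
-/

section

variable {F : Type*} [Field F]

theorem mulA11_self (a b : F) : mulA11 (a, b) (a, b) = (2 * a * b, a ^ 2 - b ^ 2) := by
  simp only [mulA11, Prod.mk.injEq]
  constructor <;> ring

theorem mulA11_self_eq_self_iff (h2 : (2 : F) ≠ 0) (a b : F) :
    mulA11 (a, b) (a, b) = (a, b) ↔
      (a = 0 ∧ (b = 0 ∨ b = -1)) ∨ (b = 1 / 2 ∧ a ^ 2 = 3 / 4) := by
  have h4 : (4 : F) ≠ 0 := by
    rw [show (4 : F) = 2 * 2 by norm_num]
    exact mul_ne_zero h2 h2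
  rw [mulA11_self, Prod.mk.injEq]
  constructor
  · rintro ⟨hab, hb⟩
    have ha_or : a * (2 * b - 1) = 0 := by linear_combination hab
    rcases mul_eq_zero.mp ha_or with rfl | hb'
    · have hb_roots : b * (b + 1) = 0 := by linear_combination -hb
      refine .inl ⟨rfl, ?_⟩
      rcases mul_eq_zero.mp hb_roots with hb0 | hb1
      · exact .inl hb0
      · exact .inr (eq_neg_of_add_eq_zero_left hb1)
    · have hb2 : b = 1 / 2 := by field_simp; linear_combination hb'
      subst hb2
      refine .inr ⟨rfl, ?_⟩
      field_simp at hb ⊢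
      linear_combination hb
  · rintro (⟨rfl, rfl | rfl⟩ | ⟨rfl, ha⟩)
    · constructor <;> ring
    · constructor <;> ring
    · constructor
      · field_simp
      · field_simp at ha ⊢
        linear_combination ha

end

theorem stmt_9_general {F : Type*} [Field F] (h2 : ringChar F ≠ 2)
    (s : F) (hs : s ^ 2 = 3) :
    {v : F × F | v ≠ 0 ∧ mulA11 v v = v} =
      {((0 : F), (-1 : F)), ((s / 2 : F), (1 / 2 : F)), ((-(s / 2) : F), (1 / 2 : F))} := by
  have two : (2 : F) ≠ 0 := Ring.two_ne_zero h2
  have half_sq : (s / 2) ^ 2 = 3 / 4 := by rw [div_pow, hs]; norm_num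
  ext ⟨a, b⟩
  simp only [Set.mem_ofPred_eq, mulA11_self_eq_self_iff two, Set.mem_insert_iff,
    Set.mem_singleton_iff, Prod.mk.injEq, ne_eq, Prod.mk_eq_zero, ← half_sq,
    sq_eq_sq_iff_eq_or_eq_neg]
  constructor
  · rintro ⟨hne, ⟨rfl, rfl | rfl⟩ | ⟨rfl, rfl | rfl⟩⟩ <;> simp_all
  · rintro (⟨rfl, rfl⟩ | ⟨rfl, rfl⟩ | ⟨rfl, rfl⟩) <;> simp [two]

theorem stmt_9 {F : Type*} [Field F] (h2 : ringChar F ≠ 2) (h3 : ringChar F ≠ 3)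
    (s : F) (hs : s ^ 2 = 3) :
    {v : F × F | v ≠ 0 ∧ mulA11 v v = v} =
      {((0 : F), (-1 : F)), ((s / 2 : F), (1 / 2 : F)), ((-(s / 2) : F), (1 / 2 : F))} :=
  stmt_9_general h2 s hs
end

section
/- Let F be a field with char F ≠ 2,3 and A₁₀ the 2-dimensional algebra with e₁e₁ = 0, e₁e₂ = e₂e₁ = e₁, e₂e₂ = −e₂. Then the only idempotent of A₁₀ is −e₂. -/
/-- Multiplication of `A₁₀`: `e₁e₁ = 0`, `e₁e₂ = e₂e₁ = e₁`, `e₂e₂ = -e₂`. -/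
def mulA10 {F : Type*} [Field F] (u v : F × F) : F × F :=
  (u.1 * v.2 + u.2 * v.1, -(u.2 * v.2))

theorem mulA10_self_eq_self_iff {F : Type*} [Field F] (h3 : (3 : F) ≠ 0) (v : F × F) :
    mulA10 v v = v ↔ v = 0 ∨ v = (0, -1) := by
  obtain ⟨a, b⟩ := v
  -- `(a, b)² = (a, b)` reads `2ab = a` and `-b² = b`, so `b ∈ {0, -1}` and then `a = 0` or `3a = 0`.
  simp only [mulA10, Prod.mk.injEq, Prod.mk_eq_zero]
  constructor
  · rintro ⟨ha, hb⟩
    rcases mul_eq_zero.mp (show b * (b + 1) = 0 by linear_combination -hb) with hb0 | hb1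
    · subst hb0
      exact Or.inl ⟨by simpa using ha.symm, rfl⟩
    · obtain rfl : b = -1 := eq_neg_of_add_eq_zero_left hb1
      have h3a : 3 * a = 0 := by linear_combination -ha
      exact Or.inr ⟨(mul_eq_zero.mp h3a).resolve_left h3, rfl⟩
  · rintro (⟨rfl, rfl⟩ | ⟨rfl, rfl⟩) <;> constructor <;> ring

theorem stmt_10_general {F : Type*} [Field F] (h3 : ringChar F ≠ 3) :
    {v : F × F | v ≠ 0 ∧ mulA10 v v = v} = {((0 : F), (-1 : F))} := by
  have h3' : (3 : F) ≠ 0 := fun h =>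
    h3 (CharP.ringChar_of_prime_eq_zero Nat.prime_three (by exact_mod_cast h))
  ext v
  simp only [Set.mem_ofPred_eq, Set.mem_singleton_iff, mulA10_self_eq_self_iff h3']
  constructor
  · rintro ⟨hv, hv0 | rfl⟩
    · exact absurd hv0 hv
    · rfl
  · rintro rfl
    exact ⟨by simp, Or.inr rfl⟩

theorem stmt_10 {F : Type*} [Field F] (h2 : ringChar F ≠ 2) (h3 : ringChar F ≠ 3) :
    {v : F × F | v ≠ 0 ∧ mulA10 v v = v} = {((0 : F), (-1 : F))} :=
  stmt_10_general h3
end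

section
/- Let F be any field and A₁₂ the 2-dimensional algebra with e₁e₁ = e₂ and all other products of basis vectors zero. Then A₁₂ has no idempotents, and F·e₂ is its unique one-dimensional subalgebra. -/
/-- Multiplication of `A₁₂`: `e₁e₁ = e₂`, all other products of basis vectors zero. -/
def mulA12 {F : Type*} [Field F] (u v : F × F) : F × F :=
  ((0 : F), u.1 * v.1)

/-!
Every product lies on the line `F e₂`, and `v v = v₁² e₂`. An idempotent `v = v v` therefore has
`v₁ = 0`, whence `v = v v = 0`. A line `F w` closed under multiplication contains `w w = w₁² e₂`;
if `w₁ ≠ 0` this vector is not a multiple of `w` unless `w₁² = 0`, so `w₁ = 0` and `F w = F e₂`.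
Conversely `F e₂` contains every product.
-/

namespace A12

variable {F : Type*} [Field F]

@[simp]
theorem mulA12_fst (u v : F × F) : (mulA12 u v).1 = 0 := rfl

@[simp]
theorem mulA12_snd (u v : F × F) : (mulA12 u v).2 = u.1 * v.1 := rfl

theorem mem_span_e₂_iff (x : F × F) :
    x ∈ Submodule.span F {((0 : F), (1 : F))} ↔ x.1 = 0 := by
  rw [Submodule.mem_span_singleton]
  constructor
  · rintro ⟨c, rfl⟩
    simp
  · intro hx
    exact ⟨x.2, Prod.ext (by simp [hx]) (by simp)⟩

theorem mulA12_mem_span_e₂ (u v : F × F) :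
    mulA12 u v ∈ Submodule.span F {((0 : F), (1 : F))} :=
  (mem_span_e₂_iff _).2 (mulA12_fst u v)

theorem mulA12_self_ne_self {v : F × F} (hv : v ≠ 0) : mulA12 v v ≠ v := by
  intro h
  have hv₁ : v.1 = 0 := by rw [← h, mulA12_fst]
  have hv₂ : v.2 = 0 := by rw [← h, mulA12_snd, hv₁, zero_mul]
  exact hv (Prod.ext hv₁ hv₂)

theorem span_singleton_eq_span_e₂_iff {w : F × F} (hw : w ≠ 0) :
    Submodule.span F {w} = Submodule.span F {((0 : F), (1 : F))} ↔ w.1 = 0 := by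
  constructor
  · intro h
    rw [← mem_span_e₂_iff, ← h]
    exact Submodule.mem_span_singleton_self w
  · intro hw₁
    have hw₂ : w.2 ≠ 0 := fun hw₂ ↦ hw (Prod.ext hw₁ hw₂)
    have hw_eq : w = w.2 • ((0 : F), (1 : F)) := Prod.ext (by simp [hw₁]) (by simp)
    rw [hw_eq, Submodule.span_singleton_smul_eq (IsUnit.mk0 _ hw₂)]

theorem fst_eq_zero_of_mulA12_self_mem_span {w : F × F}
    (h : mulA12 w w ∈ Submodule.span F {w}) : w.1 = 0 := by
  obtain ⟨c, hc⟩ := Submodule.mem_span_singleton.1 h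
  have hc₁ : c * w.1 = 0 := congrArg Prod.fst hc
  have hc₂ : c * w.2 = w.1 * w.1 := congrArg Prod.snd hc
  by_contra hw₁
  have hc₀ : c = 0 := (mul_eq_zero.1 hc₁).resolve_right hw₁
  rw [hc₀, zero_mul] at hc₂
  exact hw₁ (mul_self_eq_zero.1 hc₂.symm)

theorem mulA12_closed_span_singleton_iff {w : F × F} (hw : w ≠ 0) :
    (∀ u v : F × F, u ∈ Submodule.span F {w} → v ∈ Submodule.span F {w} →
        mulA12 u v ∈ Submodule.span F {w}) ↔
      Submodule.span F {w} = Submodule.span F {((0 : F), (1 : F))} := by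
  constructor
  · intro h
    rw [span_singleton_eq_span_e₂_iff hw]
    exact fst_eq_zero_of_mulA12_self_mem_span
      (h w w (Submodule.mem_span_singleton_self w) (Submodule.mem_span_singleton_self w))
  · intro h u v _ _
    rw [h]
    exact mulA12_mem_span_e₂ u v

end A12

theorem stmt_11 {F : Type*} [Field F] :
    (¬∃ v : F × F, v ≠ 0 ∧ mulA12 v v = v) ∧
      (∀ w : F × F, w ≠ 0 →
        ((∀ u v : F × F, u ∈ Submodule.span F {w} → v ∈ Submodule.span F {w} →
            mulA12 u v ∈ Submodule.span F {w}) ↔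
          Submodule.span F {w} = Submodule.span F {(((0 : F), (1 : F)) : F × F)})) :=
  ⟨fun ⟨_, hv, h⟩ ↦ A12.mulA12_self_ne_self hv h,
    fun _ hw ↦ A12.mulA12_closed_span_singleton_iff hw⟩
end

section
/- Let A be a 2-dimensional algebra over F with structure constants α₁,…,α₄, β₁,…,β₄. For y₀ ∈ F, the subspace F·(e₁ + y₀e₂) is a right ideal of A if and only if y₀²α₄ + y₀(α₂ − β₄) − β₂ = 0 and y₀²α₃ + y₀(α₁ − β₃) − β₁ = 0. -/
/-!
The product is bilinear, so `F·w` is a right ideal exactly when `w·e₁` and `w·e₂` lie in `F·w`.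
For `w = e₁ + y₀e₂` a vector `(a, b)` lies in `F·w` iff `b = y₀ a`, and for `w·e₂` and `w·e₁`
this proportionality is the first and the second quadratic equation respectively.
-/

def amul {F : Type*} [Field F] (α₁ α₂ α₃ α₄ β₁ β₂ β₃ β₄ : F) (u v : F × F) : F × F :=
  (α₁ * u.1 * v.1 + α₂ * u.1 * v.2 + α₃ * u.2 * v.1 + α₄ * u.2 * v.2,
   β₁ * u.1 * v.1 + β₂ * u.1 * v.2 + β₃ * u.2 * v.1 + β₄ * u.2 * v.2)

theorem Prod.mem_span_singleton_one_iff {R : Type*} [CommSemiring R] (y : R) (p : R × R) :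
    p ∈ Submodule.span R {((1 : R), y)} ↔ p.2 = y * p.1 := by
  rw [Submodule.mem_span_singleton]
  constructor
  · rintro ⟨c, rfl⟩
    simp [mul_comm]
  · intro h
    exact ⟨p.1, Prod.ext (mul_one _) (by simp [h, mul_comm])⟩

section amul

variable {F : Type*} [Field F] (α₁ α₂ α₃ α₄ β₁ β₂ β₃ β₄ : F)

theorem amul_smul_left (c : F) (u v : F × F) :
    amul α₁ α₂ α₃ α₄ β₁ β₂ β₃ β₄ (c • u) v = c • amul α₁ α₂ α₃ α₄ β₁ β₂ β₃ β₄ u v := by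
  simp only [amul, Prod.smul_mk, Prod.smul_fst, Prod.smul_snd, smul_eq_mul, Prod.mk.injEq]
  constructor <;> ring

theorem amul_eq_fst_smul_add_snd_smul (u v : F × F) :
    amul α₁ α₂ α₃ α₄ β₁ β₂ β₃ β₄ u v =
      v.1 • amul α₁ α₂ α₃ α₄ β₁ β₂ β₃ β₄ u (1, 0) + v.2 • amul α₁ α₂ α₃ α₄ β₁ β₂ β₃ β₄ u (0, 1) := by
  simp only [amul, Prod.smul_mk, smul_eq_mul, Prod.mk_add_mk, Prod.mk.injEq]
  constructor <;> ring

theorem forall_amul_mem_span_singleton_iff (w : F × F) :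
    (∀ v : F × F, ∀ u ∈ Submodule.span F {w},
        amul α₁ α₂ α₃ α₄ β₁ β₂ β₃ β₄ u v ∈ Submodule.span F {w}) ↔
      amul α₁ α₂ α₃ α₄ β₁ β₂ β₃ β₄ w (1, 0) ∈ Submodule.span F {w} ∧
        amul α₁ α₂ α₃ α₄ β₁ β₂ β₃ β₄ w (0, 1) ∈ Submodule.span F {w} := by
  refine ⟨fun h ↦ ⟨h _ w (Submodule.mem_span_singleton_self w),
    h _ w (Submodule.mem_span_singleton_self w)⟩, ?_⟩
  rintro ⟨h₁, h₂⟩ v u hu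
  obtain ⟨c, rfl⟩ := Submodule.mem_span_singleton.mp hu
  rw [amul_smul_left, amul_eq_fst_smul_add_snd_smul]
  exact Submodule.smul_mem _ c
    (Submodule.add_mem _ (Submodule.smul_mem _ _ h₁) (Submodule.smul_mem _ _ h₂))

end amul

theorem stmt_14 {F : Type*} [Field F] (α₁ α₂ α₃ α₄ β₁ β₂ β₃ β₄ : F) (y₀ : F) :
    (∀ v : F × F, ∀ u ∈ Submodule.span F {(((1 : F), y₀) : F × F)},
        amul α₁ α₂ α₃ α₄ β₁ β₂ β₃ β₄ u v ∈ Submodule.span F {(((1 : F), y₀) : F × F)}) ↔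
      (y₀ ^ 2 * α₄ + y₀ * (α₂ - β₄) - β₂ = 0 ∧ y₀ ^ 2 * α₃ + y₀ * (α₁ - β₃) - β₁ = 0) := by
  rw [forall_amul_mem_span_singleton_iff, Prod.mem_span_singleton_one_iff,
    Prod.mem_span_singleton_one_iff, and_comm]
  simp only [amul, mul_one, mul_zero, add_zero, zero_add]
  refine and_congr ⟨fun h ↦ ?_, fun h ↦ ?_⟩ ⟨fun h ↦ ?_, fun h ↦ ?_⟩ <;>
    linear_combination -h
end

section
/- Let A be a 2-dimensional algebra over F with structure constants satisfying β₂ ≠ β₃, α₂ = α₃, and α₂ ≠ 0. Then A has no one-dimensional two-sided ideal (A is simple). -/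
/-!
Since `α₂ = α₃`, every commutator `v w - w v` is a multiple of `e₂ = (0, 1)`, namely
`(v.1 w.2 - v.2 w.1)(β₂ - β₃) • e₂`. For `w ≠ 0` some `v` makes that scalar nonzero, so a
two-sided ideal `F w` contains `e₂`, hence also `e₁ e₂ = (α₂, β₂)`; but `e₂` and `(α₂, β₂)` are
linearly independent because `α₂ ≠ 0`, so they cannot both lie on a line.
-/

open Submodule

section

variable {R : Type*} [CommRing R]

theorem exists_cross_ne_zero {w : R × R} (hw : w ≠ 0) : ∃ v : R × R, v.1 * w.2 - v.2 * w.1 ≠ 0 := by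
  by_cases h₂ : w.2 = 0
  · have h₁ : w.1 ≠ 0 := fun h₁ => hw (Prod.ext h₁ h₂)
    exact ⟨(0, 1), by simpa using h₁⟩
  · exact ⟨(1, 0), by simpa using h₂⟩

theorem cross_eq_zero_of_mem_span_singleton {w x y : R × R} (hx : x ∈ span R {w})
    (hy : y ∈ span R {w}) : x.1 * y.2 - x.2 * y.1 = 0 := by
  obtain ⟨a, rfl⟩ := mem_span_singleton.mp hx
  obtain ⟨b, rfl⟩ := mem_span_singleton.mp hy
  simp only [Prod.smul_fst, Prod.smul_snd, smul_eq_mul]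
  ring

end

theorem amul_sub_amul_swap {F : Type*} [Field F] (α₁ α₂ α₃ α₄ β₁ β₂ β₃ β₄ : F) (u v : F × F) :
    amul α₁ α₂ α₃ α₄ β₁ β₂ β₃ β₄ u v - amul α₁ α₂ α₃ α₄ β₁ β₂ β₃ β₄ v u =
      (u.1 * v.2 - u.2 * v.1) • (α₂ - α₃, β₂ - β₃) := by
  ext <;> simp only [amul, Prod.fst_sub, Prod.snd_sub, Prod.smul_fst, Prod.smul_snd,
    smul_eq_mul] <;> ring

theorem stmt_17 {F : Type*} [Field F] (α₁ α₂ α₃ α₄ β₁ β₂ β₃ β₄ : F)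
    (hβ : β₂ ≠ β₃) (hα : α₂ = α₃) (hα2 : α₂ ≠ 0) :
    ¬∃ w : F × F, w ≠ 0 ∧
      ∀ v : F × F, ∀ u ∈ Submodule.span F {w},
        amul α₁ α₂ α₃ α₄ β₁ β₂ β₃ β₄ v u ∈ Submodule.span F {w} ∧
        amul α₁ α₂ α₃ α₄ β₁ β₂ β₃ β₄ u v ∈ Submodule.span F {w} := by
  rintro ⟨w, hw, hideal⟩
  obtain ⟨v, hv⟩ := exists_cross_ne_zero hw
  have hw_mem := mem_span_singleton_self (R := F) w
  have hcomm : ((v.1 * w.2 - v.2 * w.1) * (β₂ - β₃)) • ((0 : F), (1 : F)) ∈ span F {w} := by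
    have h := sub_mem (hideal v w hw_mem).1 (hideal v w hw_mem).2
    rw [amul_sub_amul_swap, hα, sub_self] at h
    convert h using 1
    ext <;> simp
  have he₂ : ((0 : F), (1 : F)) ∈ span F {w} :=
    (smul_mem_iff _ (mul_ne_zero hv (sub_ne_zero.mpr hβ))).mp hcomm
  have hcross := cross_eq_zero_of_mem_span_singleton he₂ (hideal (1, 0) _ he₂).1
  simp only [amul] at hcross
  exact hα2 (by linear_combination -hcross)
end

section
/- Let F be a field with char F ≠ 2,3 and let A₅(α₁) be the 2-dimensional algebra with e₁e₁ = α₁e₁ + e₂, e₁e₂ = (2α₁−1)e₂, e₂e₁ = (1−α₁)e₂, e₂e₂ = 0. Then the element e_q ∈ A₅(α₁) satisfies e_q(uv) = (e_q u)v + u(e_q v) − uv for all u,v if and only if α₁ = 1 and e_q = e₁ + t e₂ for some t ∈ F. -/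
/-- Multiplication of `A₅(α₁)`: `e₁e₁ = α₁e₁ + e₂`, `e₁e₂ = (2α₁-1)e₂`,
`e₂e₁ = (1-α₁)e₂`, `e₂e₂ = 0`. -/
def mulA5 {F : Type*} [Field F] (α₁ : F) (u v : F × F) : F × F :=
  (α₁ * u.1 * v.1,
   u.1 * v.1 + (2 * α₁ - 1) * u.1 * v.2 + (1 - α₁) * u.2 * v.1)

def IsLeftQuasiunit {A : Type*} [AddCommGroup A] (mul : A → A → A) (e : A) : Prop :=
  ∀ u v : A, mul e (mul u v) = mul (mul e u) v + mul u (mul e v) - mul u v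

section A5

variable {F : Type*} [Field F] {α₁ : F} {e : F × F}

theorem isLeftQuasiunit_mulA5_one (t : F) : IsLeftQuasiunit (mulA5 1) ((1 : F), t) := by
  intro u v
  ext <;> simp only [mulA5, Prod.fst_add, Prod.snd_add, Prod.fst_sub, Prod.snd_sub] <;> ring

theorem IsLeftQuasiunit.mulA5_fst_eq_one (h : IsLeftQuasiunit (mulA5 α₁) e) : e.1 = 1 := by
  have h₁₁ := congrArg Prod.snd (h (1, 0) (1, 0))
  simp only [mulA5, Prod.snd_add, Prod.snd_sub] at h₁₁
  linear_combination -h₁₁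

theorem IsLeftQuasiunit.mulA5_param_eq_one (h : IsLeftQuasiunit (mulA5 α₁) e) : α₁ = 1 := by
  have h₁₁ := congrArg Prod.fst (h (1, 0) (1, 0))
  have h₁₂ := congrArg Prod.snd (h (1, 0) (0, 1))
  simp only [mulA5, Prod.fst_add, Prod.fst_sub, Prod.snd_add, Prod.snd_sub, h.mulA5_fst_eq_one]
    at h₁₁ h₁₂
  -- `h₁₁` reads `α₁(α₁ - 1) = 0` and `h₁₂` reads `(2α₁ - 1)(α₁ - 1) = 0`:
  -- twice the first minus the second is `α₁ - 1`.
  linear_combination -2 * h₁₁ + h₁₂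

end A5

theorem stmt_18_general {F : Type*} [Field F]
    (α₁ : F) (e_q : F × F) :
    (∀ u v : F × F,
        mulA5 α₁ e_q (mulA5 α₁ u v) =
          mulA5 α₁ (mulA5 α₁ e_q u) v + mulA5 α₁ u (mulA5 α₁ e_q v) - mulA5 α₁ u v) ↔
      (α₁ = 1 ∧ ∃ t : F, e_q = ((1 : F), t)) := by
  constructor
  · intro (h : IsLeftQuasiunit (mulA5 α₁) e_q)
    exact ⟨h.mulA5_param_eq_one, e_q.2, Prod.ext h.mulA5_fst_eq_one rfl⟩
  · rintro ⟨rfl, t, rfl⟩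
    exact isLeftQuasiunit_mulA5_one t

theorem stmt_18 {F : Type*} [Field F] (h2 : ringChar F ≠ 2) (h3 : ringChar F ≠ 3)
    (α₁ : F) (e_q : F × F) :
    (∀ u v : F × F,
        mulA5 α₁ e_q (mulA5 α₁ u v) =
          mulA5 α₁ (mulA5 α₁ e_q u) v + mulA5 α₁ u (mulA5 α₁ e_q v) - mulA5 α₁ u v) ↔
      (α₁ = 1 ∧ ∃ t : F, e_q = ((1 : F), t)) :=
  stmt_18_general α₁ e_q
end
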